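/- arXiv:1203.1605 — 4 statements merged into one kernel-verified Lean document; each statement's English description precedes it below -/
import Mathlib

section
/- For a Bernoulli variable with parameter p ∈ [0,1], the characteristic-function factor satisfies |(1-p)e^{-2πi p t} + p e^{2πi(1-p)t}| ≤ exp(-c p(1-p) t²) for all t ∈ [-1/2, 1/2], where c > 0 is an absolute constant. -/
open Real

/-! Up to the unimodular factor `exp(-2πipt)`, the quantity is `(1-p) + p e^{iθ}` with `θ = 2πt`,
whose squared modulus is `1 - 2p(1-p)(1 - cos θ)`. On `|t| ≤ 1/2` the quadratic cosine bound gives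
`1 - cos θ ≥ 8t²`, and `1 - x ≤ e^{-x}` finishes the proof with `c = 8`. -/

namespace Complex

lemma norm_le_exp_neg_of_normSq_le {z : ℂ} {a : ℝ} (h : normSq z ≤ 1 - 2 * a) :
    ‖z‖ ≤ Real.exp (-a) := by
  have hexp : normSq z ≤ Real.exp (-a) ^ 2 := by
    rw [← Real.exp_nat_mul]
    push_cast
    linarith [Real.add_one_le_exp (2 * -a)]
  rw [← sq_le_sq₀ (norm_nonneg z) (Real.exp_pos _).le, Complex.sq_norm]
  exact hexp

lemma norm_mul_exp_neg_add_mul_exp (u v : ℂ) (x y : ℝ) :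
    ‖u * exp (-x * I) + v * exp (y * I)‖ = ‖u + v * exp ((x + y) * I)‖ := by
  have hfactor : u * exp (-x * I) + v * exp (y * I) =
      exp (↑(-x) * I) * (u + v * exp ((x + y) * I)) := by
    rw [ofReal_neg, mul_add, mul_left_comm _ v, ← exp_add]
    ring_nf
  rw [hfactor, norm_mul, norm_exp_ofReal_mul_I, one_mul]

lemma normSq_one_sub_add_mul_exp (p θ : ℝ) :
    normSq ((1 - p) + p * exp (θ * I)) = 1 - 2 * p * (1 - p) * (1 - Real.cos θ) := by
  have hform : (1 - (p : ℂ)) + p * exp (θ * I) =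
      ((1 - p + p * Real.cos θ : ℝ) : ℂ) + ((p * Real.sin θ : ℝ) : ℂ) * I := by
    rw [exp_mul_I, ← ofReal_cos, ← ofReal_sin]
    push_cast
    ring
  rw [hform, normSq_add_mul_I]
  linear_combination p ^ 2 * Real.sin_sq_add_cos_sq θ

lemma norm_one_sub_add_mul_exp_le (p θ : ℝ) :
    ‖(1 - p) + p * exp (θ * I)‖ ≤ Real.exp (-(p * (1 - p) * (1 - Real.cos θ))) := by
  apply norm_le_exp_neg_of_normSq_le
  rw [normSq_one_sub_add_mul_exp]
  linarith

end Complex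

lemma eight_mul_sq_le_one_sub_cos_two_pi_mul {t : ℝ} (ht : |t| ≤ 1 / 2) :
    8 * t ^ 2 ≤ 1 - cos (2 * π * t) := by
  have hθ : |2 * π * t| ≤ π := by
    rw [abs_mul, abs_of_pos two_pi_pos]
    nlinarith [pi_pos]
  have hcos := cos_le_one_sub_mul_cos_sq hθ
  have hcoef : 2 / π ^ 2 * (2 * π * t) ^ 2 = 8 * t ^ 2 := by
    field_simp
    ring
  linarith

/-- `|(1-p)e^{-2πi p t} + p e^{2πi(1-p)t}| ≤ exp(-c p(1-p) t²)` for
`p ∈ [0,1]`, `|t| ≤ 1/2`, with an absolute constant `c > 0`. -/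
theorem bernoulli_char_factor_bound :
    ∃ c : ℝ, 0 < c ∧
      ∀ p : ℝ, p ∈ Set.Icc (0 : ℝ) 1 →
        ∀ t : ℝ, |t| ≤ 1 / 2 →
          ‖((1 - (p : ℂ)) * Complex.exp (-(2 * π * p * t) * Complex.I) +
                (p : ℂ) * Complex.exp ((2 * π * (1 - p) * t) * Complex.I))‖ ≤
            Real.exp (-c * p * (1 - p) * t ^ 2) := by
  refine ⟨8, by norm_num, fun p hp t ht => ?_⟩
  have hpp : 0 ≤ p * (1 - p) := mul_nonneg hp.1 (sub_nonneg.2 hp.2)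
  have hphase : (2 * π * p * t + 2 * π * (1 - p) * t : ℂ) = (2 * π * t : ℝ) := by
    push_cast
    ring
  have hcos := eight_mul_sq_le_one_sub_cos_two_pi_mul ht
  have hnorm := Complex.norm_mul_exp_neg_add_mul_exp (1 - p) p (2 * π * p * t) (2 * π * (1 - p) * t)
  push_cast at hnorm
  rw [hnorm, hphase]
  refine (Complex.norm_one_sub_add_mul_exp_le p _).trans (Real.exp_le_exp.2 ?_)
  nlinarith
end

section
/- For a Bernoulli variable with parameter p ∈ [0,1] and |t| small, the Taylor expansion holds: (1-p)e^{-2πi p t} + p e^{2πi(1-p)t} = exp(-2π² p(1-p) t² + O(p(1-p)|t|³)), where the implied constant is absolute and |t| ≤ 1/10. -/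
/-!
Writing `θ = 2πt`, the left-hand side is `e^{-ipθ} (1 + w)` with `w = p (e^{iθ} - 1)`, `‖w‖ ≤ p|θ|`.
Expanding `log (1 + w) = w - w²/2 + O(‖w‖³)` and `e^{iθ} = 1 + iθ - θ²/2 + O(|θ|³)` gives
`log (1 + w) = ipθ - p(1-p)θ²/2 + O(p|θ|³)`, and `p ≤ 2p(1-p)` for `p ≤ 1/2`.
The case `p > 1/2` follows from the symmetry `(p, θ) ↦ (1 - p, -θ)` of the left-hand side.
-/

open Real

namespace Complex

theorem norm_exp_sub_one_sub_id_sub_sq_div_two_le {x : ℂ} (hx : ‖x‖ ≤ 1) :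
    ‖exp x - 1 - x - x ^ 2 / 2‖ ≤ 2 / 9 * ‖x‖ ^ 3 :=
  calc
    ‖exp x - 1 - x - x ^ 2 / 2‖ = ‖exp x - ∑ m ∈ Finset.range 3, x ^ m / m.factorial‖ := by
      congr 1
      simp only [Finset.sum_range_succ, Finset.sum_range_zero, Nat.factorial]
      push_cast
      ring
    _ ≤ ‖x‖ ^ 3 * ((Nat.succ 3 : ℝ) * (Nat.factorial 3 * (3 : ℕ) : ℝ)⁻¹) :=
      exp_bound hx (by decide)
    _ = 2 / 9 * ‖x‖ ^ 3 := by norm_num [Nat.factorial]; ring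

theorem norm_log_one_add_sub_self_add_sq_div_two_le {z : ℂ} (hz : ‖z‖ ≤ 1 / 2) :
    ‖log (1 + z) - z + z ^ 2 / 2‖ ≤ 2 / 3 * ‖z‖ ^ 3 := by
  have hinv : (1 - ‖z‖)⁻¹ ≤ 2 := by
    rw [inv_le_comm₀ (by linarith) two_pos]; linarith
  calc
    ‖log (1 + z) - z + z ^ 2 / 2‖ = ‖log (1 + z) - logTaylor 3 z‖ := by
      congr 1
      simp only [logTaylor_succ, logTaylor_zero, Pi.add_apply]
      push_cast
      ring
    _ ≤ ‖z‖ ^ 3 * (1 - ‖z‖)⁻¹ / 3 :=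
      (norm_log_sub_logTaylor_le 2 (hz.trans_lt (by norm_num))).trans_eq (by norm_num)
    _ ≤ ‖z‖ ^ 3 * 2 / 3 := by gcongr
    _ = 2 / 3 * ‖z‖ ^ 3 := by ring

end Complex

open Complex in
/-- `𝔼[exp(iθ(X - p))]` for `X ∼ Bernoulli(p)`. -/
noncomputable def centeredBernoulliCharFun (p θ : ℝ) : ℂ :=
  (1 - p) * exp (-(p * θ) * I) + p * exp ((1 - p) * θ * I)

namespace centeredBernoulliCharFun

open Complex

theorem eq_exp_mul (p θ : ℝ) :
    centeredBernoulliCharFun p θ = exp (-(p * θ) * I) * (1 + p * (exp (θ * I) - 1)) := by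
  have h : exp ((1 - p) * θ * I) = exp (-(p * θ) * I) * exp (θ * I) := by
    rw [← Complex.exp_add]; ring_nf
  rw [centeredBernoulliCharFun, h]
  ring

theorem one_sub_neg (p θ : ℝ) :
    centeredBernoulliCharFun (1 - p) (-θ) = centeredBernoulliCharFun p θ := by
  simp only [centeredBernoulliCharFun]
  push_cast
  ring_nf

theorem norm_mul_exp_sub_one_le {p : ℝ} (hp₀ : 0 ≤ p) (θ : ℝ) :
    ‖(p : ℂ) * (exp (θ * I) - 1)‖ ≤ p * |θ| := by
  rw [norm_mul, norm_real, norm_of_nonneg hp₀, mul_comm (θ : ℂ)]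
  gcongr
  exact norm_exp_I_mul_ofReal_sub_one_le

/-- With `x = θi` and `u = exp x - 1`, the left-hand side splits as
`(log (1 + pu) - pu + (pu)²/2) + p (u - x - x²/2) - (p²/2) (u - x)(u + x)`. -/
theorem norm_log_sub_le_of_le_half {p θ : ℝ} (hp₀ : 0 ≤ p) (hp : p ≤ 1 / 2) (hθ : |θ| ≤ 1) :
    ‖log (1 + p * (exp (θ * I) - 1)) - (p * θ * I - p * (1 - p) * θ ^ 2 / 2)‖ ≤ p * |θ| ^ 3 := by
  set x : ℂ := θ * I
  set u : ℂ := exp x - 1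
  set w : ℂ := p * u
  have hx : ‖x‖ = |θ| := by simp [x]
  have hw : ‖w‖ ≤ p * |θ| := norm_mul_exp_sub_one_le hp₀ θ
  have hlog := norm_log_one_add_sub_self_add_sq_div_two_le (z := w) (by nlinarith [abs_nonneg θ])
  have hr := norm_exp_sub_one_sub_id_sub_sq_div_two_le (hx.trans_le hθ)
  rw [hx] at hr
  have hux : ‖u - x‖ ≤ |θ| ^ 2 := by
    simpa [u, hx, sq_abs] using norm_exp_sub_one_sub_id_le (hx.trans_le hθ)
  have hupx : ‖u + x‖ ≤ 2 * |θ| := by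
    have hu : ‖u‖ ≤ |θ| := by simpa [u, x, mul_comm] using norm_exp_I_mul_ofReal_sub_one_le (x := θ)
    have := norm_add_le u x
    linarith
  have hsplit : log (1 + w) - (p * θ * I - p * (1 - p) * θ ^ 2 / 2) =
      (log (1 + w) - w + w ^ 2 / 2) + p * (exp x - 1 - x - x ^ 2 / 2)
        - p ^ 2 / 2 * ((u - x) * (u + x)) := by
    simp only [w, u, x]
    linear_combination ((p : ℂ) * (1 - p) * θ ^ 2 / 2) * I_sq
  have hp₀' : ‖(p : ℂ)‖ = p := by rw [norm_real, norm_of_nonneg hp₀]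
  rw [hsplit]
  calc
    _ ≤ ‖log (1 + w) - w + w ^ 2 / 2‖ + p * ‖exp x - 1 - x - x ^ 2 / 2‖
          + p ^ 2 / 2 * (‖u - x‖ * ‖u + x‖) := by
      refine (norm_sub_le _ _).trans (add_le_add ((norm_add_le _ _).trans_eq ?_) (le_of_eq ?_))
      · rw [norm_mul, hp₀']
      · rw [norm_mul, norm_mul, norm_div, norm_pow, hp₀']; norm_num
    _ ≤ 2 / 3 * (p * |θ|) ^ 3 + p * (2 / 9 * |θ| ^ 3) + p ^ 2 / 2 * (|θ| ^ 2 * (2 * |θ|)) := by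
      have hw3 : ‖log (1 + w) - w + w ^ 2 / 2‖ ≤ 2 / 3 * (p * |θ|) ^ 3 := hlog.trans (by gcongr)
      gcongr
    _ ≤ p * |θ| ^ 3 := by
      have : p ^ 2 ≤ 1 / 4 := by nlinarith
      have hθ3 : 0 ≤ p * |θ| ^ 3 := by positivity
      nlinarith

theorem exists_eq_exp_of_le_half {p θ : ℝ} (hp₀ : 0 ≤ p) (hp : p ≤ 1 / 2) (hθ : |θ| ≤ 1) :
    ∃ E : ℂ, ‖E‖ ≤ 2 * p * (1 - p) * |θ| ^ 3 ∧
      centeredBernoulliCharFun p θ = exp ((-(p * (1 - p) * θ ^ 2 / 2) : ℝ) + E) := by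
  set w : ℂ := p * (exp (θ * I) - 1)
  have hw : 1 + w ≠ 0 := slitPlane_ne_zero <| mem_slitPlane_of_norm_lt_one <|
    (norm_mul_exp_sub_one_le hp₀ θ).trans_lt (by nlinarith [abs_nonneg θ])
  refine ⟨log (1 + w) - (p * θ * I - p * (1 - p) * θ ^ 2 / 2), ?_, ?_⟩
  · refine (norm_log_sub_le_of_le_half hp₀ hp hθ).trans ?_
    have : 0 ≤ p * |θ| ^ 3 := by positivity
    nlinarith
  · have h : centeredBernoulliCharFun p θ = exp (-(p * θ) * I) * exp (log (1 + w)) := by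
      rw [exp_log hw, eq_exp_mul]
    rw [h, ← Complex.exp_add]
    congr 1
    push_cast
    ring

theorem exists_eq_exp {p θ : ℝ} (hp : p ∈ Set.Icc (0 : ℝ) 1) (hθ : |θ| ≤ 1) :
    ∃ E : ℂ, ‖E‖ ≤ 2 * p * (1 - p) * |θ| ^ 3 ∧
      centeredBernoulliCharFun p θ = exp ((-(p * (1 - p) * θ ^ 2 / 2) : ℝ) + E) := by
  obtain ⟨hp₀, hp₁⟩ := hp
  rcases le_or_gt p (1 / 2) with hp | hp
  · exact exists_eq_exp_of_le_half hp₀ hp hθ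
  · obtain ⟨E, hE, hEq⟩ :=
      exists_eq_exp_of_le_half (p := 1 - p) (θ := -θ) (by linarith) (by linarith) (by rwa [abs_neg])
    refine ⟨E, by rw [abs_neg] at hE; linarith, ?_⟩
    rw [← one_sub_neg, hEq]
    ring_nf

end centeredBernoulliCharFun

/-- Taylor expansion
`(1-p)e^{-2πi p t} + p e^{2πi(1-p)t} = exp(-2π² p(1-p) t² + O(p(1-p)|t|³))`
for `p ∈ [0,1]` and `|t| ≤ 1/10`, with an absolute implied constant. -/
theorem bernoulli_char_factor_taylor :
    ∃ C : ℝ, 0 < C ∧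
      ∀ p : ℝ, p ∈ Set.Icc (0 : ℝ) 1 →
        ∀ t : ℝ, |t| ≤ 1 / 10 →
          ∃ E : ℂ, ‖E‖ ≤ C * p * (1 - p) * |t| ^ 3 ∧
            (1 - (p : ℂ)) * Complex.exp (-(2 * π * p * t) * Complex.I) +
                (p : ℂ) * Complex.exp ((2 * π * (1 - p) * t) * Complex.I) =
              Complex.exp (-(2 * π ^ 2 * p * (1 - p) * t ^ 2 : ℝ) + E) := by
  refine ⟨16 * π ^ 3, by positivity, fun p hp t ht => ?_⟩
  have hθ : |2 * π * t| ≤ 1 := by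
    rw [abs_mul, abs_of_pos (by positivity)]
    nlinarith [pi_lt_d2, abs_nonneg t]
  obtain ⟨E, hE, hEq⟩ := centeredBernoulliCharFun.exists_eq_exp hp hθ
  refine ⟨E, hE.trans_eq ?_, ?_⟩
  · rw [abs_mul, abs_of_pos (by positivity : 0 < 2 * π)]
    ring
  · convert hEq using 3
    · simp only [centeredBernoulliCharFun]
      push_cast
      ring_nf
    · push_cast
      ring
end

section
/- With V, P, J as above (no nonzero element of V supported in J), the operator Q := 1_{Jᶜ} P (P 1_{Jᶜ} P)_V^{-1} P 1_{Jᶜ} is self-adjoint, idempotent, and has range equal to 1_{Jᶜ} V; hence Q is the orthogonal projection onto the subspace 1_{Jᶜ} V. -/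
open MeasureTheory

/-! Write `E := 1_{Jᶜ}` and `A := P E P`. Since `B` maps into `V = range P` and kills `Vᗮ = ker P`,
`P B = B = B P`, and `B A = P`. These relations alone make `B` self-adjoint and give `B E B = B`,
so `Q = E B E` is a self-adjoint idempotent. Its range is that of `E P`, because `Q = E P · B E`
and `Q · E P = E P`. -/

/-- Multiplication by the indicator function of a measurable set `J`, as a continuous
linear operator on `L²(ℝ)`. -/
noncomputable def indicatorCLM (J : Set ℝ) (hJ : MeasurableSet J) :
    Lp ℂ 2 (volume : Measure ℝ) →L[ℂ] Lp ℂ 2 (volume : Measure ℝ) :=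
  LinearMap.mkContinuous
    { toFun := fun f => MemLp.toLp (J.indicator ⇑f) ((Lp.memLp f).indicator hJ)
      map_add' := fun f g => by
        apply Lp.ext
        filter_upwards [MemLp.coeFn_toLp (μ := volume) (p := 2) (E := ℂ) ((Lp.memLp (f + g)).indicator hJ),
          MemLp.coeFn_toLp (μ := volume) (p := 2) (E := ℂ) ((Lp.memLp f).indicator hJ),
          MemLp.coeFn_toLp (μ := volume) (p := 2) (E := ℂ) ((Lp.memLp g).indicator hJ),
          Lp.coeFn_add f g,
          Lp.coeFn_add (MemLp.toLp (J.indicator ⇑f) ((Lp.memLp f).indicator hJ))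
            (MemLp.toLp (J.indicator ⇑g) ((Lp.memLp g).indicator hJ))] with x h1 h2 h3 h4 h5
        rw [h1, h5, Pi.add_apply, h2, h3]
        by_cases hx : x ∈ J
        · rw [Set.indicator_of_mem hx, Set.indicator_of_mem hx, Set.indicator_of_mem hx, h4]
          rfl
        · rw [Set.indicator_of_notMem hx, Set.indicator_of_notMem hx,
            Set.indicator_of_notMem hx]
          simp
      map_smul' := fun c f => by
        apply Lp.ext
        filter_upwards [MemLp.coeFn_toLp (μ := volume) (p := 2) (E := ℂ) ((Lp.memLp (c • f)).indicator hJ),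
          MemLp.coeFn_toLp (μ := volume) (p := 2) (E := ℂ) ((Lp.memLp f).indicator hJ),
          Lp.coeFn_smul c f,
          Lp.coeFn_smul c (MemLp.toLp (J.indicator ⇑f) ((Lp.memLp f).indicator hJ))] with x h1 h2 h3 h4
        simp only [RingHom.id_apply]
        rw [h1, h4, Pi.smul_apply, h2]
        by_cases hx : x ∈ J
        · rw [Set.indicator_of_mem hx, Set.indicator_of_mem hx, h3]
          rfl
        · rw [Set.indicator_of_notMem hx, Set.indicator_of_notMem hx]
          simp
      }
    1 (fun f => by
      rw [one_mul]
      show ‖MemLp.toLp (μ := volume) (p := 2) (E := ℂ) (J.indicator ⇑f) ((Lp.memLp f).indicator hJ)‖ ≤ ‖f‖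
      rw [Lp.norm_toLp, Lp.norm_def]
      exact ENNReal.toReal_mono (Lp.eLpNorm_ne_top f) (eLpNorm_indicator_le _))

section CompressionInverse

variable {R : Type*} [Semigroup R] {e p b : R}

theorem mul_mul_self_of_leftInverse_compression (hbp : b * p = b) (hpb : p * b = b)
    (hba : b * (p * e * p) = p) : b * e * b = b := by
  calc b * e * b = b * p * e * (p * b) := by rw [hbp, hpb]
    _ = b * (p * e * p) * b := by simp only [mul_assoc]
    _ = b := by rw [hba, hpb]

theorem IsIdempotentElem.conj_of_leftInverse_compression (he : IsIdempotentElem e)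
    (hbp : b * p = b) (hpb : p * b = b) (hba : b * (p * e * p) = p) :
    IsIdempotentElem (e * b * e) := by
  calc e * b * e * (e * b * e) = e * (b * (e * e) * b) * e := by simp only [mul_assoc]
    _ = e * b * e := by rw [he.eq, mul_mul_self_of_leftInverse_compression hbp hpb hba,
      mul_assoc]

theorem conj_mul_of_leftInverse_compression (he : IsIdempotentElem e) (hbp : b * p = b)
    (hba : b * (p * e * p) = p) : e * b * e * (e * p) = e * p := by
  calc e * b * e * (e * p) = e * b * (e * e) * p := by simp only [mul_assoc]
    _ = e * (b * p) * e * p := by rw [he.eq, hbp]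
    _ = e * (b * (p * e * p)) := by simp only [mul_assoc]
    _ = e * p := by rw [hba]

theorem IsSelfAdjoint.of_mul_eq_of_mul_eq [StarMul R] {a : R} (ha : IsSelfAdjoint a)
    (hp : IsSelfAdjoint p) (hba : b * a = p) (hbp : b * p = b) : IsSelfAdjoint b := by
  have hab : a * star b = p := by rw [← ha.star_eq, ← star_mul, hba, hp.star_eq]
  calc star b = p * star b := by conv_lhs => rw [← hbp, star_mul, hp.star_eq]
    _ = b := by rw [← hba, mul_assoc, hab, hbp]

end CompressionInverse

namespace ContinuousLinearMap

theorem mul_eq_right_of_range_le {R M : Type*} [Semiring R] [TopologicalSpace M]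
    [AddCommMonoid M] [Module R M] {p b : M →L[R] M} (hp : IsIdempotentElem p)
    (hb : LinearMap.range b.toLinearMap ≤ LinearMap.range p.toLinearMap) : p * b = b :=
  coe_inj.mp <|
    (LinearMap.IsIdempotentElem.comp_eq_right_iff (IsIdempotentElem.toLinearMap hp) _).mpr hb

theorem mul_eq_of_leftInverse_on_range {R M : Type*} [Semiring R] [TopologicalSpace M]
    [AddCommMonoid M] [Module R M] {p a b : M →L[R] M} (hap : a * p = a)
    (hb : ∀ v ∈ LinearMap.range p.toLinearMap, b (a v) = v) : b * a = p := by
  ext w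
  change b (a w) = p w
  rw [← hap]
  exact hb _ ⟨w, rfl⟩

theorem mul_eq_left_of_orthogonal_range_le_ker {𝕜 H : Type*} [RCLike 𝕜]
    [NormedAddCommGroup H] [InnerProductSpace 𝕜 H] [CompleteSpace H] {p b : H →L[𝕜] H}
    (hp : IsStarProjection p)
    (hb : (LinearMap.range p.toLinearMap)ᗮ ≤ LinearMap.ker b.toLinearMap) : b * p = b := by
  have hker : LinearMap.ker p.toLinearMap ≤ LinearMap.ker b.toLinearMap := by
    rwa [← IsStarNormal.orthogonal_range hp.isSelfAdjoint.isStarNormal]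
  exact coe_inj.mp <| (LinearMap.IsIdempotentElem.comp_eq_left_iff
    (IsIdempotentElem.toLinearMap hp.isIdempotentElem) _).mpr hker

theorem range_eq_of_eq_mul_of_mul_eq {R M : Type*} [Semiring R] [TopologicalSpace M]
    [AddCommMonoid M] [Module R M] {q x y : M →L[R] M} (hq : q = x * y) (hx : q * x = x) :
    LinearMap.range q.toLinearMap = LinearMap.range x.toLinearMap :=
  le_antisymm (hq ▸ LinearMap.range_comp_le_range y.toLinearMap x.toLinearMap)
    (hx ▸ LinearMap.range_comp_le_range x.toLinearMap q.toLinearMap)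

end ContinuousLinearMap

theorem indicatorCLM_coeFn (J : Set ℝ) (hJ : MeasurableSet J)
    (f : Lp ℂ 2 (volume : Measure ℝ)) :
    (indicatorCLM J hJ f : ℝ → ℂ) =ᵐ[volume] J.indicator ⇑f := by
  change (MemLp.toLp (J.indicator ⇑f) ((Lp.memLp f).indicator hJ) : ℝ → ℂ) =ᵐ[volume] _
  exact MemLp.coeFn_toLp _

theorem isIdempotentElem_indicatorCLM (J : Set ℝ) (hJ : MeasurableSet J) :
    IsIdempotentElem (indicatorCLM J hJ) := by
  ext f
  filter_upwards [indicatorCLM_coeFn J hJ f, indicatorCLM_coeFn J hJ (indicatorCLM J hJ f),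
    (indicatorCLM_coeFn J hJ f).indicator (s := J)] with x h1 h2 h3
  rw [mul_apply_eq_comp, h2, h3, Set.indicator_indicator, Set.inter_self, h1]

theorem isSelfAdjoint_indicatorCLM (J : Set ℝ) (hJ : MeasurableSet J) :
    IsSelfAdjoint (indicatorCLM J hJ) := by
  rw [ContinuousLinearMap.isSelfAdjoint_iff_isSymmetric]
  intro f g
  rw [L2.inner_def, L2.inner_def]
  apply integral_congr_ae
  filter_upwards [indicatorCLM_coeFn J hJ f, indicatorCLM_coeFn J hJ g] with x hf hg
  simp only [ContinuousLinearMap.coe_coe, RCLike.inner_apply, hf, hg]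
  by_cases hx : x ∈ J <;> simp [hx]

theorem conditioned_projection_formula_general
    (V : Submodule ℂ (Lp ℂ 2 (volume : Measure ℝ)))
    (P : Lp ℂ 2 (volume : Measure ℝ) →L[ℂ] Lp ℂ 2 (volume : Measure ℝ))
    (hPsa : IsSelfAdjoint P) (hPidem : P * P = P)
    (hPrange : LinearMap.range (P : Lp ℂ 2 (volume : Measure ℝ) →ₗ[ℂ] Lp ℂ 2 volume) = V)
    (J : Set ℝ) (hJ : MeasurableSet J)
    (B : Lp ℂ 2 (volume : Measure ℝ) →L[ℂ] Lp ℂ 2 (volume : Measure ℝ))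
    (hBrange : ∀ w, B w ∈ V)
    (hBperp : ∀ w ∈ Vᗮ, B w = 0)
    (hBinv₁ : ∀ v ∈ V, B ((P * indicatorCLM Jᶜ hJ.compl * P) v) = v) :
    IsSelfAdjoint (indicatorCLM Jᶜ hJ.compl * P * B * P * indicatorCLM Jᶜ hJ.compl) ∧
      (indicatorCLM Jᶜ hJ.compl * P * B * P * indicatorCLM Jᶜ hJ.compl) *
          (indicatorCLM Jᶜ hJ.compl * P * B * P * indicatorCLM Jᶜ hJ.compl) =
        indicatorCLM Jᶜ hJ.compl * P * B * P * indicatorCLM Jᶜ hJ.compl ∧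
      LinearMap.range
          (indicatorCLM Jᶜ hJ.compl * P * B * P * indicatorCLM Jᶜ hJ.compl :
            Lp ℂ 2 (volume : Measure ℝ) →L[ℂ] Lp ℂ 2 volume).toLinearMap =
        V.map (indicatorCLM Jᶜ hJ.compl).toLinearMap := by
  have hE := isSelfAdjoint_indicatorCLM Jᶜ hJ.compl
  have hEidem := isIdempotentElem_indicatorCLM Jᶜ hJ.compl
  set E := indicatorCLM Jᶜ hJ.compl
  subst hPrange
  have hPB : P * B = B :=
    ContinuousLinearMap.mul_eq_right_of_range_le hPidem (by rintro _ ⟨w, rfl⟩; exact hBrange w)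
  have hBP : B * P = B :=
    ContinuousLinearMap.mul_eq_left_of_orthogonal_range_le_ker ⟨hPidem, hPsa⟩ hBperp
  have hBA : B * (P * E * P) = P :=
    ContinuousLinearMap.mul_eq_of_leftInverse_on_range (by rw [mul_assoc, hPidem]) hBinv₁
  have hQ : E * P * B * P * E = E * B * E := by rw [mul_assoc E P B, hPB, mul_assoc E B P, hBP]
  have hB : IsSelfAdjoint B := .of_mul_eq_of_mul_eq (hE.conjugate_self hPsa) hPsa hBA hBP
  refine ⟨hQ ▸ hB.conjugate_self hE,
    hQ ▸ hEidem.conj_of_leftInverse_compression hBP hPB hBA, ?_⟩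
  calc LinearMap.range (E * P * B * P * E).toLinearMap
      = LinearMap.range (E * P).toLinearMap := by
        refine ContinuousLinearMap.range_eq_of_eq_mul_of_mul_eq (y := B * E) ?_ ?_
        · rw [hQ]
          nth_rw 1 [← hPB]
          simp only [mul_assoc]
        · rw [hQ, conj_mul_of_leftInverse_compression hEidem hBP hBA]
    _ = (LinearMap.range P.toLinearMap).map E.toLinearMap := by
        rw [ContinuousLinearMap.toLinearMap_mul, Module.End.mul_eq_comp, LinearMap.range_comp]

set_option maxHeartbeats 1000000 in
/-- with `V`, `P`, `J` as above (no nonzero element of `V` supported in `J`),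
and `B` the inverse of the restriction of `P 1_{Jᶜ} P` to `V`, extended by `0` on `Vᗮ`,
the operator `Q := 1_{Jᶜ} P B P 1_{Jᶜ}` is self-adjoint, idempotent, and has range
`1_{Jᶜ} V`; i.e. `Q` is the orthogonal projection onto `1_{Jᶜ} V`. -/
theorem conditioned_projection_formula
    (V : Submodule ℂ (Lp ℂ 2 (volume : Measure ℝ))) [FiniteDimensional ℂ V]
    (P : Lp ℂ 2 (volume : Measure ℝ) →L[ℂ] Lp ℂ 2 (volume : Measure ℝ))
    (hPsa : IsSelfAdjoint P) (hPidem : P * P = P)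
    (hPrange : LinearMap.range (P : Lp ℂ 2 (volume : Measure ℝ) →ₗ[ℂ] Lp ℂ 2 volume) = V)
    (J : Set ℝ) (hJ : MeasurableSet J)
    (hsupp : ∀ f : Lp ℂ 2 (volume : Measure ℝ), f ∈ V →
      indicatorCLM Jᶜ hJ.compl f = 0 → f = 0)
    (B : Lp ℂ 2 (volume : Measure ℝ) →L[ℂ] Lp ℂ 2 (volume : Measure ℝ))
    (hBrange : ∀ w, B w ∈ V)
    (hBperp : ∀ w ∈ Vᗮ, B w = 0)
    (hBinv₁ : ∀ v ∈ V, B ((P * indicatorCLM Jᶜ hJ.compl * P) v) = v)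
    (hBinv₂ : ∀ v ∈ V, (P * indicatorCLM Jᶜ hJ.compl * P) (B v) = v) :
    IsSelfAdjoint (indicatorCLM Jᶜ hJ.compl * P * B * P * indicatorCLM Jᶜ hJ.compl) ∧
      (indicatorCLM Jᶜ hJ.compl * P * B * P * indicatorCLM Jᶜ hJ.compl) *
          (indicatorCLM Jᶜ hJ.compl * P * B * P * indicatorCLM Jᶜ hJ.compl) =
        indicatorCLM Jᶜ hJ.compl * P * B * P * indicatorCLM Jᶜ hJ.compl ∧
      LinearMap.range
          (indicatorCLM Jᶜ hJ.compl * P * B * P * indicatorCLM Jᶜ hJ.compl :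
            Lp ℂ 2 (volume : Measure ℝ) →L[ℂ] Lp ℂ 2 volume).toLinearMap =
        V.map (indicatorCLM Jᶜ hJ.compl).toLinearMap :=
  conditioned_projection_formula_general V P hPsa hPidem hPrange J hJ B hBrange hBperp hBinv₁
end

section
/- Suppose P_n, P are orthogonal projections on L²(ℝ) with continuous kernels K_n, K such that K_n → K locally uniformly and K_n(y,y) → K(y,y) uniformly for y in a compact interval J, and suppose ∫_ℝ |K(x,y)|² dx = K(y,y) and ∫_ℝ |K_n(x,y)|² dx = K_n(y,y) for all y. Then ∫_ℝ |K(x,y) - K_n(x,y)|² dx → 0 uniformly for y ∈ J. -/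
/-!
Write `u = K(·, y)` and `v = Kₙ(·, y)`. On a box `[-L, L]` the rows are uniformly close, so
`∫_{[-L, L]} |u - v|²` is small and the masses `∫_{[-L, L]} |u|²`, `∫_{[-L, L]} |v|²` are close.
Outside the box, `|u - v|² ≤ 2|u|² + 2|v|²`, and the tail mass of `v` is controlled through the
total masses: `∫_{|x| > L} |v|² = Kₙ(y, y) - ∫_{[-L, L]} |v|²`, where `Kₙ(y, y) ≈ K(y, y)` and
`∫_{[-L, L]} |v|² ≈ ∫_{[-L, L]} |u|² = K(y, y) - ∫_{|x| > L} |u|²`. So the tail of `v` is not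
much larger than the tail of `u`, which is uniformly small on `J`.
-/

open MeasureTheory Filter Set

lemma sq_norm_sub_le {E : Type*} [SeminormedAddCommGroup E] (a b : E) :
    ‖a - b‖ ^ 2 ≤ 2 * ‖a‖ ^ 2 + 2 * ‖b‖ ^ 2 := by
  nlinarith [norm_sub_le a b, norm_nonneg (a - b), sq_nonneg (‖a‖ - ‖b‖)]

lemma sq_norm_sub_sq_norm_le {E : Type*} [SeminormedAddCommGroup E] {a b : E} {δ : ℝ}
    (h : ‖a - b‖ ≤ δ) : ‖a‖ ^ 2 - ‖b‖ ^ 2 ≤ 2 * δ * ‖a‖ := by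
  have hδ : 0 ≤ δ := (norm_nonneg _).trans h
  have hb : ‖a‖ - δ ≤ ‖b‖ := by linarith [norm_sub_norm_le a b]
  rcases le_total ‖a‖ δ with ha | ha
  · nlinarith [norm_nonneg a, sq_nonneg ‖b‖]
  · nlinarith [mul_self_le_mul_self (sub_nonneg.2 ha) hb]

lemma integral_sq_norm_sub_le {α E : Type*} [MeasurableSpace α] {μ : Measure α}
    [NormedAddCommGroup E] {u v : α → E} {S : Set α} {δ M : ℝ}
    (hu : MemLp u 2 μ) (hv : MemLp v 2 μ) (hS : MeasurableSet S) (hSμ : μ S ≠ ⊤)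
    (hδ : ∀ x ∈ S, ‖u x - v x‖ ≤ δ) (hM : ∀ x ∈ S, ‖u x‖ ≤ M) :
    ∫ x, ‖u x - v x‖ ^ 2 ∂μ ≤ μ.real S * (δ ^ 2 + 4 * δ * M)
      + 4 * ∫ x in Sᶜ, ‖u x‖ ^ 2 ∂μ + 2 * ((∫ x, ‖v x‖ ^ 2 ∂μ) - ∫ x, ‖u x‖ ^ 2 ∂μ) := by
  have hf := (memLp_two_iff_integrable_sq_norm hu.1).1 hu
  have hg := (memLp_two_iff_integrable_sq_norm hv.1).1 hv
  have hh : Integrable (fun x => ‖u x - v x‖ ^ 2) μ :=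
    (memLp_two_iff_integrable_sq_norm (hu.1.sub hv.1)).1 (hu.sub hv)
  have hconst (c : ℝ) : IntegrableOn (fun _ => c) S μ := integrableOn_const hSμ
  have h_near : ∫ x in S, ‖u x - v x‖ ^ 2 ∂μ ≤ μ.real S * δ ^ 2 := by
    calc ∫ x in S, ‖u x - v x‖ ^ 2 ∂μ ≤ ∫ _ in S, δ ^ 2 ∂μ :=
          setIntegral_mono_on hh.integrableOn (hconst _) hS fun x hx =>
            pow_le_pow_left₀ (norm_nonneg _) (hδ x hx) 2
      _ = μ.real S * δ ^ 2 := by rw [setIntegral_const, smul_eq_mul]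
  have h_far : ∫ x in Sᶜ, ‖u x - v x‖ ^ 2 ∂μ
      ≤ 2 * ∫ x in Sᶜ, ‖u x‖ ^ 2 ∂μ + 2 * ∫ x in Sᶜ, ‖v x‖ ^ 2 ∂μ := by
    rw [← integral_const_mul, ← integral_const_mul,
      ← integral_add (hf.const_mul 2).integrableOn (hg.const_mul 2).integrableOn]
    exact setIntegral_mono_on hh.integrableOn
      ((hf.const_mul 2).add (hg.const_mul 2)).integrableOn hS.compl
      fun x _ => sq_norm_sub_le (u x) (v x)
  have h_mass : ∫ x in S, ‖u x‖ ^ 2 ∂μ ≤ ∫ x in S, ‖v x‖ ^ 2 ∂μ + μ.real S * (2 * δ * M) := by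
    rw [← smul_eq_mul, ← setIntegral_const, ← integral_add hg.integrableOn (hconst _)]
    refine setIntegral_mono_on hf.integrableOn (hg.integrableOn.add (hconst _)) hS fun x hx => ?_
    have hδ0 : 0 ≤ δ := (norm_nonneg _).trans (hδ x hx)
    nlinarith [sq_norm_sub_sq_norm_le (hδ x hx), mul_le_mul_of_nonneg_left (hM x hx) hδ0]
  linarith [integral_add_compl hS hh, integral_add_compl hS hf, integral_add_compl hS hg]

/-- if `Kn`, `K` are continuous kernels of orthogonal projections on
`L²(ℝ)` with `Kn → K` locally uniformly, `Kn(y,y) → K(y,y)` uniformly on a compact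
interval `J = [a,b]`, the rows satisfy `∫ |K(x,y)|² dx = K(y,y)` (and similarly for `Kn`),
and the tails of `∫ |K(x,y)|² dx` are uniformly small for `y ∈ J`, then
`∫ |K(x,y) - Kn(x,y)|² dx → 0` uniformly for `y ∈ J`. -/
theorem rows_converge_L2
    (K : ℝ → ℝ → ℂ) (Kn : ℕ → ℝ → ℝ → ℂ) (a b : ℝ)
    (hKcont : Continuous fun p : ℝ × ℝ => K p.1 p.2)
    (hKncont : ∀ n, Continuous fun p : ℝ × ℝ => Kn n p.1 p.2)
    (hconv : ∀ S : Set (ℝ × ℝ), IsCompact S →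
      TendstoUniformlyOn (fun n p => Kn n p.1 p.2) (fun p => K p.1 p.2) atTop S)
    (hdiag : TendstoUniformlyOn (fun n y => Kn n y y) (fun y => K y y) atTop (Set.Icc a b))
    (hrowint : ∀ y : ℝ, Integrable (fun x => ‖K x y‖ ^ 2) (volume : Measure ℝ))
    (hrownint : ∀ n, ∀ y : ℝ, Integrable (fun x => ‖Kn n x y‖ ^ 2) (volume : Measure ℝ))
    (hrow : ∀ y : ℝ, (∫ x : ℝ, ‖K x y‖ ^ 2) = (K y y).re)
    (hrown : ∀ n, ∀ y : ℝ, (∫ x : ℝ, ‖Kn n x y‖ ^ 2) = (Kn n y y).re)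
    (htail : ∀ ε > (0 : ℝ), ∃ L > (0 : ℝ), ∀ y ∈ Set.Icc a b,
      (∫ x in {x : ℝ | L < |x|}, ‖K x y‖ ^ 2) < ε) :
    ∀ ε > (0 : ℝ), ∃ N : ℕ, ∀ n ≥ N, ∀ y ∈ Set.Icc a b,
      (∫ x : ℝ, ‖K x y - Kn n x y‖ ^ 2) < ε := by
  intro ε hε
  obtain ⟨L, hL, htailL⟩ := htail (ε / 8) (by positivity)
  have hbox : IsCompact (Icc (-L) L ×ˢ Icc a b) := isCompact_Icc.prod isCompact_Icc
  obtain ⟨M, hM⟩ := hbox.exists_bound_of_continuousOn hKcont.continuousOn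
  obtain ⟨δ, hδε, hδ⟩ : ∃ δ : ℝ, 2 * L * (δ ^ 2 + 4 * δ * M) < ε / 4 ∧ 0 < δ := by
    have : Tendsto (fun δ : ℝ => 2 * L * (δ ^ 2 + 4 * δ * M)) (nhdsWithin 0 (Ioi 0)) (nhds 0) :=
      tendsto_nhdsWithin_of_tendsto_nhds (by simpa using (by fun_prop : Continuous
        fun δ : ℝ => 2 * L * (δ ^ 2 + 4 * δ * M)).tendsto 0)
    exact ((this.eventually (gt_mem_nhds (by positivity))).and self_mem_nhdsWithin).exists
  obtain ⟨N, hN⟩ := eventually_atTop.1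
    ((Metric.tendstoUniformlyOn_iff.1 (hconv _ hbox) δ hδ).and
      (Metric.tendstoUniformlyOn_iff.1 hdiag (ε / 8) (by positivity)))
  refine ⟨N, fun n hn y hy => ?_⟩
  obtain ⟨hnear, hdiag_n⟩ := hN n hn
  have hrow_L2 : MemLp (K · y) 2 volume := (memLp_two_iff_integrable_sq_norm
    (hKcont.comp (Continuous.prodMk_left y)).aestronglyMeasurable).2 (hrowint y)
  have hrown_L2 : MemLp (Kn n · y) 2 volume := (memLp_two_iff_integrable_sq_norm
    ((hKncont n).comp (Continuous.prodMk_left y)).aestronglyMeasurable).2 (hrownint n y)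
  have key := integral_sq_norm_sub_le hrow_L2 hrown_L2 measurableSet_Icc measure_Icc_lt_top.ne
    (fun x hx => (dist_eq_norm _ _).symm.trans_le (hnear (x, y) ⟨hx, hy⟩).le)
    (fun x hx => hM (x, y) ⟨hx, hy⟩)
  have hcompl : (Icc (-L) L)ᶜ = {x | L < |x|} := by
    ext x; simp only [mem_compl_iff, mem_Icc, ← abs_le, not_le]; rfl
  rw [Real.volume_real_Icc_of_le (by linarith), hcompl, hrow, hrown] at key
  have hdiag_re : (Kn n y y).re - (K y y).re < ε / 8 := by
    rw [← Complex.sub_re]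
    refine (Complex.re_le_norm _).trans_lt ?_
    rw [← dist_eq_norm, dist_comm]
    exact hdiag_n y hy
  linarith [htailL y hy]
end
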